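/- arXiv:1612.01137 — 3 statements merged into one kernel-verified Lean document; each statement's English description precedes it below -/
import Mathlib

section
/- Every minimiser μ of I over probability measures on ℝ² has compact support. -/
/-! A minimiser `μ` has finite energy `T`, because the uniform measure on a unit segment does (the
logarithm is locally integrable). The integrand of `I` is at least `(|x|² + |y|²)/4 - 1`, hence at
least `c = R²/4 - 1` off `B_R × B_R`. With `a = μ(B_R)` and `b = 1 - a`, comparing `μ` with its
normalised restriction to `B_R` gives `a²T ≤ ∬_{B_R × B_R}`, so `a²T + cb ≤ T`; expanding
`T = (a + b)²T` yields `cb ≤ 2bT`. Taking `R` with `c > 2T` forces `b = 0`. -/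

open MeasureTheory Real
open scoped ENNReal Classical FourierTransform RealInnerProductSpace ComplexOrder

noncomputable section

abbrev E2 : Type := EuclideanSpace ℝ (Fin 2)

/-- The anisotropic interaction potential `V(x) = -log|x| + x₁²/|x|²`
(with the junk value `V 0 = 0`; the set where the true value `+∞` matters
is handled separately). -/
def V (x : E2) : ℝ := -Real.log ‖x‖ + (x 0) ^ 2 / ‖x‖ ^ 2

/-- A measure has compact support. -/
def HasCompactMeasureSupport (μ : Measure E2) : Prop :=
  ∃ K : Set E2, IsCompact K ∧ μ Kᶜ = 0

/-- Finite interaction energy `∬ V(x-y) dμ(x) dμ(y) < ∞`: the diagonal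
(where `V = +∞`) is null and `V(x-y)` is integrable. -/
def FiniteInteractionEnergy (μ : Measure E2) : Prop :=
  (μ.prod μ) {p : E2 × E2 | p.1 = p.2} = 0 ∧
    Integrable (fun p : E2 × E2 => V (p.1 - p.2)) (μ.prod μ)

/-- The interaction energy `∬ V(x-y) dμ(x) dμ(y)` as a real number. -/
def interEnergy (μ ν : Measure E2) : ℝ := ∫ p : E2 × E2, V (p.1 - p.2) ∂(μ.prod ν)

/-- The total energy `I(μ) = ∬ V(x-y) dμdμ + ∫ |x|² dμ`, with values in `[0,∞]`,
written as `∬ (V(x-y) + (|x|²+|y|²)/2) dμdμ` (valid since `μ` is a probability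
measure); the integrand is `+∞` on the diagonal and nonnegative elsewhere. -/
def Ienergy (μ : Measure E2) : ℝ≥0∞ :=
  ∫⁻ p : E2 × E2,
    (if p.1 = p.2 then (⊤ : ℝ≥0∞)
      else ENNReal.ofReal (V (p.1 - p.2) + (‖p.1‖ ^ 2 + ‖p.2‖ ^ 2) / 2)) ∂(μ.prod μ)

/-- The semi-circle law `m₁ = (1/π) δ₀ ⊗ √(2-t²) H¹⌞(-√2,√2)` on `ℝ²`. -/
def m1 : Measure E2 :=
  Measure.map (fun t : ℝ => (WithLp.toLp 2 ![0, t] : E2))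
    ((volume.restrict (Set.Ioo (-Real.sqrt 2) (Real.sqrt 2))).withDensity
      (fun t => ENNReal.ofReal (Real.sqrt (2 - t ^ 2) / Real.pi)))

/-- The potential `(V ∗ μ)(x) = ∫ V(x-y) dμ(y)`. -/
def Vconv (μ : Measure E2) (x : E2) : ℝ := ∫ y, V (x - y) ∂μ

/-- The support of a measure: points all of whose neighbourhoods have
positive measure. -/
def msupp (μ : Measure E2) : Set E2 := {x : E2 | ∀ U ∈ nhds x, 0 < μ U}


section PairEnergy

open ProbabilityTheory

variable {X : Type*} [MeasurableSpace X]

def pairEnergy (F : X × X → ℝ≥0∞) (μ : Measure X) : ℝ≥0∞ := ∫⁻ p, F p ∂(μ.prod μ)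

lemma pairEnergy_cond (F : X × X → ℝ≥0∞) (μ : Measure X) [SFinite μ] (s : Set X) :
    pairEnergy F μ[|s] = (μ s)⁻¹ * (μ s)⁻¹ * ∫⁻ p in s ×ˢ s, F p ∂(μ.prod μ) := by
  rw [pairEnergy, ProbabilityTheory.cond, Measure.prod_smul_left, Measure.prod_smul_right,
    Measure.prod_restrict, lintegral_smul_measure, lintegral_smul_measure, smul_eq_mul,
    smul_eq_mul, mul_assoc]

lemma le_two_mul_of_sq_mul_add_mul_le {a b c T : ℝ≥0∞} (hab : a + b = 1) (hb : b ≠ 0)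
    (hT : T ≠ ⊤) (h : a * a * T + c * b ≤ T) : c ≤ 2 * T := by
  have ha : a ≠ ⊤ := ne_top_of_le_ne_top ENNReal.one_ne_top (hab ▸ le_self_add)
  have hb' : b ≠ ⊤ := ne_top_of_le_ne_top ENNReal.one_ne_top (hab ▸ le_add_self)
  have hsplit : T = a * a * T + (2 * a + b) * b * T := by
    calc T = (a + b) * (a + b) * T := by rw [hab, one_mul, one_mul]
      _ = _ := by ring
  have hcb : c * b ≤ (2 * a + b) * b * T :=
    (ENNReal.add_le_add_iff_left (by finiteness)).1 (h.trans hsplit.le)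
  have hcoef : 2 * a + b ≤ 2 :=
    calc 2 * a + b ≤ 2 * a + 2 * b := by gcongr; exact le_mul_of_one_le_left' one_le_two
      _ = 2 := by rw [← mul_add, hab, mul_one]
  refine (ENNReal.mul_le_mul_iff_left hb hb').1 ?_
  calc c * b ≤ (2 * a + b) * b * T := hcb
    _ ≤ 2 * b * T := by gcongr
    _ = 2 * T * b := by ring

theorem le_two_mul_pairEnergy_of_le_pairEnergy_cond {F : X × X → ℝ≥0∞} {μ : Measure X}
    [IsProbabilityMeasure μ] {s : Set X} (hs : MeasurableSet s) (hμs : μ s ≠ 0)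
    (hμsc : μ sᶜ ≠ 0) (hfin : pairEnergy F μ ≠ ⊤) (hmin : pairEnergy F μ ≤ pairEnergy F μ[|s])
    {c : ℝ≥0∞} (hc : ∀ p ∉ s ×ˢ s, c ≤ F p) : c ≤ 2 * pairEnergy F μ := by
  set S := ∫⁻ p in s ×ˢ s, F p ∂(μ.prod μ)
  have hinside : μ s * μ s * pairEnergy F μ ≤ S := by
    rw [pairEnergy_cond] at hmin
    calc μ s * μ s * pairEnergy F μ ≤ μ s * μ s * ((μ s)⁻¹ * (μ s)⁻¹ * S) := by gcongr
      _ = (μ s * (μ s)⁻¹) * (μ s * (μ s)⁻¹) * S := by ring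
      _ = S := by rw [ENNReal.mul_inv_cancel hμs (measure_ne_top μ s), one_mul, one_mul]
  have houtside : c * μ sᶜ ≤ ∫⁻ p in (s ×ˢ s)ᶜ, F p ∂(μ.prod μ) :=
    calc c * μ sᶜ = c * (μ.prod μ) (sᶜ ×ˢ Set.univ) := by
          rw [Measure.prod_prod, measure_univ, mul_one]
      _ ≤ c * (μ.prod μ) (s ×ˢ s)ᶜ := by
          gcongr
          exact fun p hp hps => hp.1 hps.1
      _ = ∫⁻ _ in (s ×ˢ s)ᶜ, c ∂(μ.prod μ) := (setLIntegral_const _ _).symm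
      _ ≤ ∫⁻ p in (s ×ˢ s)ᶜ, F p ∂(μ.prod μ) := setLIntegral_mono' (hs.prod hs).compl hc
  refine le_two_mul_of_sq_mul_add_mul_le ((measure_add_measure_compl hs).trans measure_univ)
    hμsc hfin ?_
  calc μ s * μ s * pairEnergy F μ + c * μ sᶜ
      ≤ S + ∫⁻ p in (s ×ˢ s)ᶜ, F p ∂(μ.prod μ) := add_le_add hinside houtside
    _ = pairEnergy F μ := lintegral_add_compl _ (hs.prod hs)

end PairEnergy

def energyIntegrand (p : E2 × E2) : ℝ≥0∞ :=
  if p.1 = p.2 then ⊤ else ENNReal.ofReal (V (p.1 - p.2) + (‖p.1‖ ^ 2 + ‖p.2‖ ^ 2) / 2)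

lemma Ienergy_eq_pairEnergy (μ : Measure E2) : Ienergy μ = pairEnergy energyIntegrand μ := rfl

/-- The confinement beats the logarithm: `-log r ≥ 1 - r` and `r ≤ ‖x‖ + ‖y‖`. -/
lemma ofReal_le_energyIntegrand (p : E2 × E2) :
    ENNReal.ofReal ((‖p.1‖ ^ 2 + ‖p.2‖ ^ 2) / 4 - 1) ≤ energyIntegrand p := by
  rw [energyIntegrand]
  split_ifs with hdiag
  · exact le_top
  apply ENNReal.ofReal_le_ofReal
  have hr : 0 < ‖p.1 - p.2‖ := norm_sub_pos_iff.2 hdiag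
  have hlog := Real.log_le_sub_one_of_pos hr
  have htri := norm_sub_le p.1 p.2
  have hfrac : 0 ≤ (p.1 - p.2) 0 ^ 2 / ‖p.1 - p.2‖ ^ 2 := by positivity
  rw [V]
  nlinarith [sq_nonneg (‖p.1‖ - 2), sq_nonneg (‖p.2‖ - 2)]

lemma ofReal_le_energyIntegrand_of_notMem_closedBall_prod {R : ℝ} (hR : 0 ≤ R) {p : E2 × E2}
    (hp : p ∉ Metric.closedBall 0 R ×ˢ Metric.closedBall 0 R) :
    ENNReal.ofReal (R ^ 2 / 4 - 1) ≤ energyIntegrand p := by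
  refine le_trans ?_ (ofReal_le_energyIntegrand p)
  have hfar : R ≤ ‖p.1‖ ∨ R ≤ ‖p.2‖ := by
    simp only [Set.mem_prod, mem_closedBall_zero_iff, not_and_or, not_le] at hp
    exact hp.imp le_of_lt le_of_lt
  gcongr
  rcases hfar with h | h <;> nlinarith [sq_nonneg ‖p.1‖, sq_nonneg ‖p.2‖]

local notation "e₁" => (EuclideanSpace.single 0 1 : E2)

lemma norm_smul_single_zero (u : ℝ) : ‖u • e₁‖ = |u| := by
  simp [norm_smul]

lemma V_smul_single_zero {u : ℝ} (hu : u ≠ 0) : V (u • e₁) = 1 - Real.log u := by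
  rw [V, norm_smul_single_zero, Real.log_abs, sq_abs]
  simp [hu]
  ring

def unitSegment : Measure E2 := (volume.restrict (Set.Icc (0 : ℝ) 1)).map fun t => t • e₁

lemma lintegral_two_sub_log_lt_top :
    ∫⁻ u in Set.Icc (-1 : ℝ) 1, ENNReal.ofReal (2 - Real.log u) < ⊤ := by
  refine Integrable.lintegral_lt_top ?_
  have hlog : IntegrableOn Real.log (Set.Icc (-1 : ℝ) 1) :=
    (intervalIntegrable_iff_integrableOn_Icc_of_le (by norm_num)).1
      intervalIntegral.intervalIntegrable_log'
  exact (integrableOn_const (by simp)).sub hlog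

/-- Translation invariance of Lebesgue measure makes the bound uniform in `t`. -/
lemma setLIntegral_energyIntegrand_segment_le {t : ℝ} (ht : t ∈ Set.Icc (0 : ℝ) 1) :
    ∫⁻ s in Set.Icc (0 : ℝ) 1, energyIntegrand (t • e₁, s • e₁) ≤
      ∫⁻ u in Set.Icc (-1 : ℝ) 1, ENNReal.ofReal (2 - Real.log u) := by
  set g := (Set.Icc (-1 : ℝ) 1).indicator fun u => ENNReal.ofReal (2 - Real.log u) with hg
  calc ∫⁻ s in Set.Icc (0 : ℝ) 1, energyIntegrand (t • e₁, s • e₁)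
      ≤ ∫⁻ s in Set.Icc (0 : ℝ) 1, g (t - s) := by
        refine lintegral_mono_ae ?_
        filter_upwards [ae_restrict_mem measurableSet_Icc,
          ae_restrict_of_ae (Measure.ae_ne volume t)] with s hs hst
        have hts : t - s ≠ 0 := sub_ne_zero.2 hst.symm
        have hne : t • e₁ ≠ s • e₁ := by
          rw [← sub_ne_zero, ← sub_smul, ← norm_ne_zero_iff, norm_smul_single_zero]
          exact abs_ne_zero.2 hts
        have hmem : t - s ∈ Set.Icc (-1 : ℝ) 1 :=
          ⟨by linarith [ht.1, hs.2], by linarith [ht.2, hs.1]⟩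
        rw [energyIntegrand, if_neg hne, ← sub_smul, V_smul_single_zero hts,
          hg, Set.indicator_of_mem hmem]
        simp only [norm_smul_single_zero, sq_abs]
        apply ENNReal.ofReal_le_ofReal
        nlinarith [ht.1, ht.2, hs.1, hs.2]
    _ ≤ ∫⁻ s, g (t - s) := setLIntegral_le_lintegral _ _
    _ = ∫⁻ u, g u := lintegral_sub_left_eq_self g t
    _ = ∫⁻ u in Set.Icc (-1 : ℝ) 1, ENNReal.ofReal (2 - Real.log u) :=
        lintegral_indicator measurableSet_Icc _

instance : IsProbabilityMeasure unitSegment := by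
  have : IsProbabilityMeasure (volume.restrict (Set.Icc (0 : ℝ) 1)) := ⟨by simp⟩
  exact Measure.isProbabilityMeasure_map (by fun_prop)

lemma Ienergy_unitSegment_lt_top : Ienergy unitSegment < ⊤ := by
  set ν₁ := volume.restrict (Set.Icc (0 : ℝ) 1)
  have hmeas : Measurable fun t : ℝ => t • e₁ := by fun_prop
  calc Ienergy unitSegment
      = ∫⁻ p, energyIntegrand p ∂((ν₁.prod ν₁).map (Prod.map (· • e₁) (· • e₁))) := by
        rw [Ienergy_eq_pairEnergy, pairEnergy, unitSegment, Measure.map_prod_map _ _ hmeas hmeas]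
    _ ≤ ∫⁻ t, ∫⁻ s, energyIntegrand (t • e₁, s • e₁) ∂ν₁ ∂ν₁ :=
        (lintegral_map_le _ _).trans (lintegral_prod_le _)
    _ ≤ ∫⁻ _ in Set.Icc (0 : ℝ) 1, ∫⁻ u in Set.Icc (-1 : ℝ) 1, ENNReal.ofReal (2 - Real.log u) :=
        setLIntegral_mono' measurableSet_Icc fun t ht => setLIntegral_energyIntegrand_segment_le ht
    _ < ⊤ := by
        rw [setLIntegral_const, Real.volume_Icc, sub_zero, ENNReal.ofReal_one, mul_one]
        exact lintegral_two_sub_log_lt_top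

lemma eventually_measure_closedBall_ne_zero (μ : Measure E2) [NeZero μ] :
    ∀ᶠ R in Filter.atTop, μ (Metric.closedBall 0 R) ≠ 0 := by
  have hunion : ⋃ R : ℝ, Metric.closedBall (0 : E2) R = Set.univ :=
    Set.eq_univ_of_forall fun x => Set.mem_iUnion.2 ⟨‖x‖, by simp⟩
  have h := tendsto_measure_iUnion_atTop (μ := μ)
    (fun _ _ hRS => Metric.closedBall_subset_closedBall (x := (0 : E2)) hRS)
  rw [hunion] at h
  exact (h.eventually (lt_mem_nhds (NeZero.pos _))).mono fun R hR => hR.ne'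

/-- Every minimiser of `I` over probability measures on `ℝ²` has compact
support. -/
theorem minimiser_has_compact_support (μ : Measure E2)
    (hμ : IsProbabilityMeasure μ)
    (hmin : ∀ ν : Measure E2, IsProbabilityMeasure ν → Ienergy μ ≤ Ienergy ν) :
    HasCompactMeasureSupport μ := by
  have hfin : Ienergy μ < ⊤ := (hmin _ inferInstance).trans_lt Ienergy_unitSegment_lt_top
  have hgrow :
      Filter.Tendsto (fun R : ℝ => ENNReal.ofReal (R ^ 2 / 4 - 1)) Filter.atTop (nhds ⊤) :=
    ENNReal.tendsto_ofReal_atTop.comp <| Filter.tendsto_atTop_add_const_right _ _ <|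
      (Filter.tendsto_pow_atTop two_ne_zero).atTop_div_const (by norm_num)
  obtain ⟨R, hR, hRc, hRμ⟩ : ∃ R : ℝ, 0 ≤ R ∧ 2 * Ienergy μ < ENNReal.ofReal (R ^ 2 / 4 - 1) ∧
      μ (Metric.closedBall 0 R) ≠ 0 :=
    ((Filter.eventually_ge_atTop 0).and <| (hgrow.eventually (lt_mem_nhds (by finiteness))).and
      (eventually_measure_closedBall_ne_zero μ)).exists
  refine ⟨Metric.closedBall 0 R, isCompact_closedBall 0 R, ?_⟩
  by_contra hout
  exact hRc.not_ge <|
    le_two_mul_pairEnergy_of_le_pairEnergy_cond measurableSet_closedBall hRμ hout hfin.ne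
      (hmin _ (ProbabilityTheory.cond_isProbabilityMeasure hRμ))
      fun p hp => ofReal_le_energyIntegrand_of_notMem_closedBall_prod hR hp
end
end

section
/- For every probability measure μ on ℝ², I(μ) ≥ (1 − 2/e) ∫_{ℝ²} |x|² dμ(x). -/
/-!
Since `log t ≤ t / e`, we have `log |x - y| ≤ |x - y|² / (2e) ≤ (|x|² + |y|²) / e`, and the
anisotropic term `x₁² / |x|²` of `V` is nonnegative. Hence the integrand
`V(x - y) + (|x|² + |y|²) / 2` of `I(μ)` is pointwise at least `(1 - 2/e) (|x|² + |y|²) / 2`,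
and integrating against `μ ⊗ μ` gives the bound.
-/

open MeasureTheory Real
open scoped ENNReal Classical FourierTransform RealInnerProductSpace ComplexOrder

noncomputable section

theorem Real.log_le_div_exp_one {t : ℝ} (ht : 0 ≤ t) : Real.log t ≤ t / Real.exp 1 := by
  rcases ht.eq_or_lt with rfl | ht
  · simp
  rw [le_div_iff₀ (Real.exp_pos 1), mul_comm]
  simpa [Real.exp_log ht] using Real.exp_one_mul_le_exp (x := Real.log t)

theorem Real.log_le_sq_div_two_mul_exp_one (t : ℝ) : Real.log t ≤ t ^ 2 / (2 * Real.exp 1) := by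
  have h := Real.log_le_div_exp_one (sq_nonneg t)
  rw [Real.log_pow] at h
  rw [div_mul_eq_div_div_swap, le_div_iff₀ two_pos]
  push_cast at h
  linarith

theorem norm_sub_sq_le_two_mul {F : Type*} [SeminormedAddCommGroup F] (x y : F) :
    ‖x - y‖ ^ 2 ≤ 2 * (‖x‖ ^ 2 + ‖y‖ ^ 2) :=
  (pow_le_pow_left₀ (norm_nonneg _) (norm_sub_le x y) 2).trans add_sq_le

theorem neg_log_norm_le_V (z : E2) : -Real.log ‖z‖ ≤ V z := by
  unfold V
  have : 0 ≤ z 0 ^ 2 / ‖z‖ ^ 2 := by positivity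
  linarith

/-- Also true at `x = y`, thanks to the junk value `V 0 = 0`. -/
theorem one_sub_two_div_exp_one_mul_le_V_sub_add (x y : E2) :
    (1 - 2 / Real.exp 1) * ((‖x‖ ^ 2 + ‖y‖ ^ 2) / 2) ≤ V (x - y) + (‖x‖ ^ 2 + ‖y‖ ^ 2) / 2 := by
  have hlog : Real.log ‖x - y‖ ≤ (‖x‖ ^ 2 + ‖y‖ ^ 2) / Real.exp 1 := calc
    Real.log ‖x - y‖ ≤ ‖x - y‖ ^ 2 / (2 * Real.exp 1) := Real.log_le_sq_div_two_mul_exp_one _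
    _ ≤ 2 * (‖x‖ ^ 2 + ‖y‖ ^ 2) / (2 * Real.exp 1) := by
      gcongr; exact norm_sub_sq_le_two_mul x y
    _ = (‖x‖ ^ 2 + ‖y‖ ^ 2) / Real.exp 1 := mul_div_mul_left _ _ two_ne_zero
  have hV := neg_log_norm_le_V (x - y)
  have hsplit : (1 - 2 / Real.exp 1) * ((‖x‖ ^ 2 + ‖y‖ ^ 2) / 2)
      = (‖x‖ ^ 2 + ‖y‖ ^ 2) / 2 - (‖x‖ ^ 2 + ‖y‖ ^ 2) / Real.exp 1 := by
    field_simp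
  linarith

theorem one_sub_two_div_exp_one_nonneg : 0 ≤ 1 - 2 / Real.exp 1 := by
  rw [sub_nonneg, div_le_one (Real.exp_pos 1)]
  exact Real.exp_one_gt_two.le

theorem ofReal_mul_half_add_sq_le_energy_integrand (x y : E2) :
    ENNReal.ofReal (1 - 2 / Real.exp 1) * (((‖x‖₊ : ℝ≥0∞) ^ 2 + (‖y‖₊ : ℝ≥0∞) ^ 2) / 2) ≤
      if x = y then ⊤ else ENNReal.ofReal (V (x - y) + (‖x‖ ^ 2 + ‖y‖ ^ 2) / 2) := by
  split_ifs
  · exact le_top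
  have hsq (z : E2) : (‖z‖₊ : ℝ≥0∞) ^ 2 = ENNReal.ofReal (‖z‖ ^ 2) := by
    rw [ENNReal.ofReal_pow (norm_nonneg z), ofReal_norm, enorm_eq_nnnorm]
  have hhalf (s : ℝ) : ENNReal.ofReal s / 2 = ENNReal.ofReal (s / 2) := by
    rw [ENNReal.ofReal_div_of_pos two_pos, ENNReal.ofReal_ofNat]
  rw [hsq, hsq, ← ENNReal.ofReal_add (sq_nonneg _) (sq_nonneg _), hhalf,
    ← ENNReal.ofReal_mul one_sub_two_div_exp_one_nonneg]
  exact ENNReal.ofReal_le_ofReal (one_sub_two_div_exp_one_mul_le_V_sub_add x y)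

theorem MeasureTheory.lintegral_prod_self_half_add {α : Type*} [MeasurableSpace α]
    (μ : Measure α) [IsProbabilityMeasure μ] {f : α → ℝ≥0∞} (hf : Measurable f) :
    ∫⁻ p, (f p.1 + f p.2) / 2 ∂(μ.prod μ) = ∫⁻ x, f x ∂μ := by
  simp_rw [ENNReal.div_eq_inv_mul]
  rw [lintegral_const_mul _ (by fun_prop), lintegral_add_left (by fun_prop),
    lintegral_prod _ (by fun_prop), lintegral_prod _ (by fun_prop)]
  simp only [lintegral_const, measure_univ, mul_one]
  rw [← two_mul, ← mul_assoc, ENNReal.inv_mul_cancel two_ne_zero ENNReal.ofNat_ne_top, one_mul]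

/-- The confinement bound `I(μ) ≥ (1 - 2/e) ∫ |x|² dμ` for every probability
measure `μ` on `ℝ²`. -/
theorem energy_confinement_bound (μ : Measure E2) (hμ : IsProbabilityMeasure μ) :
    ENNReal.ofReal (1 - 2 / Real.exp 1) * ∫⁻ x, (‖x‖₊ : ℝ≥0∞) ^ 2 ∂μ ≤ Ienergy μ := by
  have hsq : Measurable fun x : E2 => (‖x‖₊ : ℝ≥0∞) ^ 2 := by fun_prop
  rw [← lintegral_prod_self_half_add μ hsq, ← lintegral_const_mul _ (by fun_prop)]
  exact lintegral_mono fun p => ofReal_mul_half_add_sq_le_energy_integrand p.1 p.2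

end
end

section
/- For all real numbers ξ₁ > 0 and ξ₂ > 0, one has ξ₁ ∫_{−π}^{π} ξ₁/(ξ₁² + (ξ₂ − cos θ)²) dθ + ξ₂ ∫_{−π}^{π} (ξ₂ − cos θ)/(ξ₁² + (ξ₂ − cos θ)²) dθ > 0. -/
open MeasureTheory Real
open scoped ENNReal Classical FourierTransform RealInnerProductSpace ComplexOrder

noncomputable section

/-!
With `z = ξ2 + i ξ1` the combined integrand is `Re (z / (z - cos θ))`: even in `θ`, but not of
constant sign. The substitution `t = tan (θ / 2)` turns `∫₀^π` into
`∫₀^∞ 2 (a t² + b) / P t`, where the quartic `P t = A t⁴ + B t² + C` satisfies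
`P (q / t) = q² P t / t⁴` for `q = √(C / A)`. Averaging the integral with its image under the
inversion `t ↦ q / t` gives the integrand `2 (a q + b) (t² + q) / (q P t)`, which is positive
because `a² C - b² A = 4 ξ1² ξ2 > 0`.
-/

open Set

section Substitutions

variable {E : Type*} [NormedAddCommGroup E] [NormedSpace ℝ E]

theorem intervalIntegral.integral_neg_self_eq_two_smul_of_even {f : ℝ → E} {a : ℝ}
    (hf : ∀ x, f (-x) = f x) (hfi : IntervalIntegrable f volume (-a) a) :
    ∫ x in -a..a, f x = (2 : ℝ) • ∫ x in 0..a, f x := by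
  have hzero : (0 : ℝ) ∈ uIcc (-a) a := by
    rcases le_total 0 a with h | h <;> simp [h]
  have hleft : ∫ x in -a..0, f x = ∫ x in 0..a, f x := by
    simpa [hf] using (intervalIntegral.integral_comp_neg (a := 0) (b := a) f).symm
  rw [← intervalIntegral.integral_add_adjacent_intervals (b := 0)
    (hfi.mono_set (uIcc_subset_uIcc_left hzero)) (hfi.mono_set (uIcc_subset_uIcc_right hzero)),
    hleft, two_smul]

theorem cos_two_mul_arctan (t : ℝ) : cos (2 * arctan t) = (1 - t ^ 2) / (1 + t ^ 2) := by
  rw [cos_two_mul, cos_arctan, div_pow, one_pow, sq_sqrt (by positivity)]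
  field_simp
  ring

theorem image_two_mul_arctan_Ioi_zero : (fun t ↦ 2 * arctan t) '' Ioi 0 = Ioo 0 π := by
  ext θ
  constructor
  · rintro ⟨t, ht, rfl⟩
    have h0 : 0 < arctan t := by simpa using arctan_strictMono ht
    constructor <;> linarith [arctan_lt_pi_div_two t]
  · rintro ⟨h0, hπ⟩
    refine ⟨tan (θ / 2), tan_pos_of_pos_of_lt_pi_div_two (by linarith) (by linarith), ?_⟩
    simp only
    rw [arctan_tan (by linarith [pi_pos]) (by linarith)]
    ring

theorem hasDerivAt_two_mul_arctan (t : ℝ) :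
    HasDerivAt (fun t ↦ 2 * arctan t) (2 / (1 + t ^ 2)) t := by
  simpa [div_eq_mul_inv] using (hasDerivAt_arctan t).const_mul 2

theorem integral_Ioo_zero_pi_eq_integral_Ioi_comp_two_mul_arctan (f : ℝ → E) :
    ∫ θ in Ioo 0 π, f θ = ∫ t in Ioi 0, (2 / (1 + t ^ 2)) • f (2 * arctan t) := by
  rw [← image_two_mul_arctan_Ioi_zero, integral_image_eq_integral_abs_deriv_smul
    measurableSet_Ioi (fun t _ ↦ (hasDerivAt_two_mul_arctan t).hasDerivWithinAt)
    (fun x _ y _ h ↦ arctan_injective (by simpa using h))]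
  refine setIntegral_congr_fun measurableSet_Ioi fun t _ ↦ ?_
  rw [abs_of_pos (by positivity)]

theorem integrableOn_Ioi_comp_two_mul_arctan_iff (f : ℝ → E) :
    IntegrableOn (fun t ↦ (2 / (1 + t ^ 2)) • f (2 * arctan t)) (Ioi 0) ↔
      IntegrableOn f (Ioo 0 π) := by
  rw [← image_two_mul_arctan_Ioi_zero, integrableOn_image_iff_integrableOn_abs_deriv_smul
    measurableSet_Ioi (fun t _ ↦ (hasDerivAt_two_mul_arctan t).hasDerivWithinAt)
    (fun x _ y _ h ↦ arctan_injective (by simpa using h))]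
  refine integrableOn_congr_fun (fun t _ ↦ ?_) measurableSet_Ioi
  rw [abs_of_pos (by positivity)]

variable {q : ℝ}

theorem image_const_div_Ioi_zero (hq : 0 < q) : (fun t ↦ q / t) '' Ioi 0 = Ioi 0 := by
  ext x
  constructor
  · rintro ⟨t, ht, rfl⟩
    exact div_pos hq ht
  · intro hx
    exact ⟨q / x, div_pos hq hx, by field_simp⟩

theorem injOn_const_div_Ioi_zero (hq : 0 < q) : InjOn (fun t ↦ q / t) (Ioi 0) := by
  intro x hx y hy h
  exact (mul_left_cancel₀ hq.ne' ((div_eq_div_iff (ne_of_gt hx) (ne_of_gt hy)).1 h)).symm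

theorem hasDerivAt_const_div {t : ℝ} (ht : t ≠ 0) :
    HasDerivAt (fun t ↦ q / t) (-(q / t ^ 2)) t := by
  simpa [div_eq_mul_inv] using (hasDerivAt_inv ht).const_mul q

theorem integral_Ioi_comp_const_div (hq : 0 < q) (f : ℝ → E) :
    ∫ t in Ioi 0, (q / t ^ 2) • f (q / t) = ∫ t in Ioi 0, f t := by
  conv_rhs => rw [← image_const_div_Ioi_zero hq]
  rw [integral_image_eq_integral_abs_deriv_smul measurableSet_Ioi
    (fun t ht ↦ (hasDerivAt_const_div (ne_of_gt ht)).hasDerivWithinAt)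
    (injOn_const_div_Ioi_zero hq)]
  refine setIntegral_congr_fun measurableSet_Ioi fun t ht ↦ ?_
  rw [abs_neg, abs_of_pos (div_pos hq (pow_pos ht 2))]

theorem integrableOn_Ioi_comp_const_div_iff (hq : 0 < q) (f : ℝ → E) :
    IntegrableOn (fun t ↦ (q / t ^ 2) • f (q / t)) (Ioi 0) ↔ IntegrableOn f (Ioi 0) := by
  conv_rhs => rw [← image_const_div_Ioi_zero hq]
  rw [integrableOn_image_iff_integrableOn_abs_deriv_smul measurableSet_Ioi
    (fun t ht ↦ (hasDerivAt_const_div (ne_of_gt ht)).hasDerivWithinAt)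
    (injOn_const_div_Ioi_zero hq)]
  refine integrableOn_congr_fun (fun t ht ↦ ?_) measurableSet_Ioi
  rw [abs_neg, abs_of_pos (div_pos hq (pow_pos ht 2))]

end Substitutions

theorem integral_Ioi_pos_of_add_comp_const_div_pos {f : ℝ → ℝ} {q : ℝ} (hq : 0 < q)
    (hf : IntegrableOn f (Ioi 0)) (hpos : ∀ t > 0, 0 < f t + q / t ^ 2 * f (q / t)) :
    0 < ∫ t in Ioi 0, f t := by
  have hg : IntegrableOn (fun t ↦ q / t ^ 2 * f (q / t)) (Ioi 0) :=
    (integrableOn_Ioi_comp_const_div_iff hq f).2 hf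
  have hsum : 0 < ∫ t in Ioi 0, (f t + q / t ^ 2 * f (q / t)) := by
    rw [setIntegral_pos_iff_support_of_nonneg_ae
      (ae_restrict_of_forall_mem measurableSet_Ioi fun t ht ↦ (hpos t ht).le) (hf.add hg)]
    calc (0 : ℝ≥0∞) < volume (Ioi (0 : ℝ)) := by simp
      _ ≤ _ := measure_mono fun t ht ↦ mem_inter (Function.mem_support.2 (hpos t ht).ne') ht
  have hinv := integral_Ioi_comp_const_div hq f
  simp only [smul_eq_mul] at hinv
  rw [integral_add hf hg, hinv] at hsum
  linarith

-- `Re (z / (z - cos θ))` for `z = ξ2 + i ξ1`.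
def cosKernel (ξ1 ξ2 θ : ℝ) : ℝ :=
  (ξ1 ^ 2 + ξ2 ^ 2 - ξ2 * cos θ) / (ξ1 ^ 2 + (ξ2 - cos θ) ^ 2)

-- `(1 + t ^ 2) ^ 2 * (ξ1 ^ 2 + (ξ2 - cos θ) ^ 2)` at `t = tan (θ / 2)`.
def halfAngleQuartic (ξ1 ξ2 t : ℝ) : ℝ :=
  (ξ1 ^ 2 + (ξ2 + 1) ^ 2) * t ^ 4 + 2 * (ξ1 ^ 2 + ξ2 ^ 2 - 1) * t ^ 2
    + (ξ1 ^ 2 + (ξ2 - 1) ^ 2)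

def halfAngleKernel (ξ1 ξ2 t : ℝ) : ℝ :=
  2 * ((ξ1 ^ 2 + ξ2 ^ 2 + ξ2) * t ^ 2 + (ξ1 ^ 2 + ξ2 ^ 2 - ξ2)) / halfAngleQuartic ξ1 ξ2 t

section Kernels

variable {ξ1 : ℝ} (ξ2 : ℝ) (h1 : 0 < ξ1)
include h1

theorem continuous_cosKernel : Continuous (cosKernel ξ1 ξ2) :=
  (continuous_const.sub (continuous_const.mul continuous_cos)).div (by fun_prop)
    fun θ ↦ by positivity

theorem mul_integral_add_mul_integral_eq_integral_cosKernel (a b : ℝ) :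
    ξ1 * (∫ θ in a..b, ξ1 / (ξ1 ^ 2 + (ξ2 - cos θ) ^ 2))
      + ξ2 * (∫ θ in a..b, (ξ2 - cos θ) / (ξ1 ^ 2 + (ξ2 - cos θ) ^ 2))
      = ∫ θ in a..b, cosKernel ξ1 ξ2 θ := by
  have hD : Continuous fun θ ↦ ξ1 ^ 2 + (ξ2 - cos θ) ^ 2 := by fun_prop
  have hD0 : ∀ θ, ξ1 ^ 2 + (ξ2 - cos θ) ^ 2 ≠ 0 := fun θ ↦ by positivity
  have hf : Continuous fun θ ↦ ξ1 * (ξ1 / (ξ1 ^ 2 + (ξ2 - cos θ) ^ 2)) :=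
    continuous_const.mul (continuous_const.div hD hD0)
  have hg : Continuous fun θ ↦ ξ2 * ((ξ2 - cos θ) / (ξ1 ^ 2 + (ξ2 - cos θ) ^ 2)) :=
    continuous_const.mul ((continuous_const.sub continuous_cos).div hD hD0)
  rw [← intervalIntegral.integral_const_mul, ← intervalIntegral.integral_const_mul,
    ← intervalIntegral.integral_add (hf.intervalIntegrable _ _) (hg.intervalIntegrable _ _)]
  refine intervalIntegral.integral_congr fun θ _ ↦ ?_
  simp only [cosKernel]
  field_simp [hD0 θ]
  ring

theorem halfAngleQuartic_pos (t : ℝ) : 0 < halfAngleQuartic ξ1 ξ2 t := by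
  have h : halfAngleQuartic ξ1 ξ2 t
      = ξ1 ^ 2 * (1 + t ^ 2) ^ 2 + (ξ2 * (1 + t ^ 2) - (1 - t ^ 2)) ^ 2 := by
    unfold halfAngleQuartic; ring
  rw [h]
  positivity

theorem two_div_mul_cosKernel_two_mul_arctan (t : ℝ) :
    2 / (1 + t ^ 2) * cosKernel ξ1 ξ2 (2 * arctan t) = halfAngleKernel ξ1 ξ2 t := by
  have hP := (halfAngleQuartic_pos ξ2 h1 t).ne'
  have hD : ξ1 ^ 2 + (ξ2 - (1 - t ^ 2) / (1 + t ^ 2)) ^ 2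
      = halfAngleQuartic ξ1 ξ2 t / (1 + t ^ 2) ^ 2 := by
    unfold halfAngleQuartic; field_simp; ring
  rw [cosKernel, halfAngleKernel, cos_two_mul_arctan, hD]
  field_simp
  ring

end Kernels

theorem div_quartic_add_comp_const_div (A B a b : ℝ) {q t : ℝ} (hq : q ≠ 0) (ht : t ≠ 0) :
    2 * (a * t ^ 2 + b) / (A * t ^ 4 + B * t ^ 2 + A * q ^ 2)
      + q / t ^ 2 * (2 * (a * (q / t) ^ 2 + b) / (A * (q / t) ^ 4 + B * (q / t) ^ 2 + A * q ^ 2))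
      = 2 * (a * q + b) * (t ^ 2 + q) / (q * (A * t ^ 4 + B * t ^ 2 + A * q ^ 2)) := by
  have hinv : A * (q / t) ^ 4 + B * (q / t) ^ 2 + A * q ^ 2
      = q ^ 2 / t ^ 4 * (A * t ^ 4 + B * t ^ 2 + A * q ^ 2) := by
    field_simp
    ring
  rw [hinv]
  field_simp
  ring

theorem halfAngleKernel_add_comp_const_div_pos {ξ1 ξ2 : ℝ} (h1 : 0 < ξ1) (h2 : 0 < ξ2) :
    ∃ q > 0, ∀ t > 0,
      0 < halfAngleKernel ξ1 ξ2 t + q / t ^ 2 * halfAngleKernel ξ1 ξ2 (q / t) := by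
  have hA : 0 < ξ1 ^ 2 + (ξ2 + 1) ^ 2 := by positivity
  have hC : 0 < ξ1 ^ 2 + (ξ2 - 1) ^ 2 := by positivity
  obtain ⟨q, hq, hCq⟩ :
      ∃ q > 0, ξ1 ^ 2 + (ξ2 - 1) ^ 2 = (ξ1 ^ 2 + (ξ2 + 1) ^ 2) * q ^ 2 :=
    ⟨_, sqrt_pos.2 (div_pos hC hA), by rw [sq_sqrt (div_pos hC hA).le]; field_simp⟩
  have hab : 0 < (ξ1 ^ 2 + ξ2 ^ 2 + ξ2) * q + (ξ1 ^ 2 + ξ2 ^ 2 - ξ2) := by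
    have hsq : (ξ1 ^ 2 + (ξ2 + 1) ^ 2) * ((ξ1 ^ 2 + ξ2 ^ 2 + ξ2) * q) ^ 2
        - (ξ1 ^ 2 + (ξ2 + 1) ^ 2) * (ξ1 ^ 2 + ξ2 ^ 2 - ξ2) ^ 2 = 4 * ξ1 ^ 2 * ξ2 := by
      linear_combination (ξ1 ^ 2 + ξ2 ^ 2 + ξ2) ^ 2 * hCq.symm
    have hlt : (ξ1 ^ 2 + ξ2 ^ 2 - ξ2) ^ 2 < ((ξ1 ^ 2 + ξ2 ^ 2 + ξ2) * q) ^ 2 :=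
      lt_of_mul_lt_mul_left (by linarith [mul_pos (pow_pos h1 2) h2]) hA.le
    nlinarith [abs_lt_of_sq_lt_sq' hlt (by positivity)]
  refine ⟨q, hq, fun t ht ↦ ?_⟩
  have hP := halfAngleQuartic_pos ξ2 h1 t
  simp only [halfAngleKernel, halfAngleQuartic] at hP ⊢
  rw [hCq] at hP ⊢
  rw [div_quartic_add_comp_const_div _ _ _ _ hq.ne' ht.ne']
  positivity

/-- The key positivity: for all `ξ₁ > 0`, `ξ₂ > 0`,
`ξ₁ ∫_{-π}^{π} ξ₁/(ξ₁² + (ξ₂-cos θ)²) dθ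
 + ξ₂ ∫_{-π}^{π} (ξ₂-cos θ)/(ξ₁² + (ξ₂-cos θ)²) dθ > 0`. -/
theorem key_positivity (ξ1 ξ2 : ℝ) (h1 : 0 < ξ1) (h2 : 0 < ξ2) :
    0 < ξ1 * (∫ θ in (-π)..π, ξ1 / (ξ1 ^ 2 + (ξ2 - Real.cos θ) ^ 2))
        + ξ2 * (∫ θ in (-π)..π, (ξ2 - Real.cos θ) / (ξ1 ^ 2 + (ξ2 - Real.cos θ) ^ 2)) := by
  have hcont := continuous_cosKernel ξ2 h1
  have hsubst : ∀ t,
      (2 / (1 + t ^ 2)) • cosKernel ξ1 ξ2 (2 * arctan t) = halfAngleKernel ξ1 ξ2 t :=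
    two_div_mul_cosKernel_two_mul_arctan ξ2 h1
  have hint : IntegrableOn (halfAngleKernel ξ1 ξ2) (Ioi 0) := by
    simpa only [hsubst] using (integrableOn_Ioi_comp_two_mul_arctan_iff _).2
      (hcont.integrableOn_Icc.mono_set Ioo_subset_Icc_self)
  obtain ⟨q, hq, hpos⟩ := halfAngleKernel_add_comp_const_div_pos h1 h2
  rw [mul_integral_add_mul_integral_eq_integral_cosKernel ξ2 h1,
    intervalIntegral.integral_neg_self_eq_two_smul_of_even (fun θ ↦ by simp [cosKernel])
      (hcont.intervalIntegrable _ _),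
    intervalIntegral.integral_of_le pi_pos.le, integral_Ioc_eq_integral_Ioo,
    integral_Ioo_zero_pi_eq_integral_Ioi_comp_two_mul_arctan]
  simp only [hsubst, smul_eq_mul]
  exact mul_pos two_pos (integral_Ioi_pos_of_add_comp_const_div_pos hq hint hpos)

end
end
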